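/- arXiv:2210.04579 — 4 statements merged into one kernel-verified Lean document; each statement's English description precedes it below -/
import Mathlib

section
/- Under the standing assumptions, the convex hull of the projection of the second-order ε-jet onto the gradient factor equals the Goldstein ε-subdifferential: conv(pr₃(𝒥²_ε f(x))) = ∂_ε f(x). -/
/-!
Write `π` for the projection of a jet onto its gradient component. The jets `jetMap f z` with `z ∈ D2`
in a closed ball are bounded (Lipschitz bound on gradients, local Hessian bound), so their
closures are compact and `π` commutes with the decreasing intersection over `δ > ε`: the set
`π (𝒥²_ε f x)` is the intersection of the closures of the gradients taken over `B̄_δ(x) ∩ D2`.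
This is contained in the corresponding intersection over all points of differentiability.

Conversely, the gradient at any point `y` of differentiability lies in the convex hull of the
closure of the gradients taken over `D2` near `y`. Otherwise a direction `v` separates it:
`∇f(z) v < u < ∇f(y) v` for all `z ∈ D2` near `y`. By Fubini almost every line parallel to `v`
meets `D2` in a set of full measure, so integrating along such a line through a point close to
`y` and using the Lipschitz continuity of `f` gives `f(y + t v) - f(y) ≤ u t`, hence
`∇f(y) v ≤ u`. Passing to the intersection over `δ > ε` uses that, in finite dimension, convex
hulls of compact sets are compact and commute with directed intersections of compact sets.
-/

open Metric Set Filter Topology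

noncomputable section

abbrev Euc (n : ℕ) := EuclideanSpace ℝ (Fin n)

abbrev JetSpace (n : ℕ) :=
  Euc n × ℝ × (Euc n →L[ℝ] ℝ) × (Euc n →L[ℝ] Euc n →L[ℝ] ℝ)

variable {n : ℕ}

/-- The 4-tuple of coefficients of the second-order Taylor expansion of `f` at `y`. -/
def jetMap (f : Euc n → ℝ) (y : Euc n) : JetSpace n :=
  (y, f y, fderiv ℝ f y, fderiv ℝ (fderiv ℝ f) y)

/-- The second-order ε-jet of `f` at `x`. -/
def jet (f : Euc n → ℝ) (D2 : Set (Euc n)) (ε : ℝ) (x : Euc n) : Set (JetSpace n) :=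
  ⋂ δ ∈ Ioi ε, closure (jetMap f '' (closedBall x δ ∩ D2))

/-- The quadratic polynomial associated to a jet element. -/
def Qpoly (j : JetSpace n) (z : Euc n) : ℝ :=
  j.2.1 + j.2.2.1 (z - j.1) + (1 / 2) * j.2.2.2 (z - j.1) (z - j.1)

/-- The second-order model `𝒯_{x,ε}`. -/
def model (f : Euc n → ℝ) (D2 : Set (Euc n)) (ε : ℝ) (x z : Euc n) : ℝ :=
  sSup ((fun j => Qpoly j z) '' jet f D2 ε x)

/-- `θ(x,ε)`, the optimal value of the model on the closed ε-ball. -/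
def theta (f : Euc n → ℝ) (D2 : Set (Euc n)) (ε : ℝ) (x : Euc n) : ℝ :=
  sInf (model f D2 ε x '' closedBall x ε)

/-- The model `𝒯^W_{x,ε}` built from a subset `W` of the jet. -/
def modelW (W : Set (JetSpace n)) (z : Euc n) : ℝ :=
  sSup ((fun j => Qpoly j z) '' W)

/-- `θ^W(x,ε)`, the optimal value of the finite model on the closed ε-ball. -/
def thetaW (W : Set (JetSpace n)) (ε : ℝ) (x : Euc n) : ℝ :=
  sInf (modelW W '' closedBall x ε)

/-- The Clarke subdifferential of `f` at `y`. -/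
def clarke (f : Euc n → ℝ) (y : Euc n) : Set (Euc n →L[ℝ] ℝ) :=
  convexHull ℝ {ξ | ∃ u : ℕ → Euc n, (∀ j, DifferentiableAt ℝ f (u j)) ∧
    Tendsto u atTop (𝓝 y) ∧ Tendsto (fun j => fderiv ℝ f (u j)) atTop (𝓝 ξ)}

/-- The Goldstein ε-subdifferential of `f` at `x`. -/
def goldstein (f : Euc n → ℝ) (ε : ℝ) (x : Euc n) : Set (Euc n →L[ℝ] ℝ) :=
  convexHull ℝ (⋂ δ ∈ Ioi ε, closure
    {g : Euc n →L[ℝ] ℝ | ∃ y ∈ closedBall x δ, DifferentiableAt ℝ f y ∧ g = fderiv ℝ f y})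

/-- The standing assumptions: `f` locally Lipschitz, `D2` the set of points of twice
differentiability, its complement a Lebesgue null set, and Hessians locally bounded. -/
def StandingAssumptions (f : Euc n → ℝ) (D2 : Set (Euc n)) : Prop :=
  LocallyLipschitz f ∧
  D2 = {y | DifferentiableAt ℝ f y ∧ DifferentiableAt ℝ (fderiv ℝ f) y} ∧
  MeasureTheory.volume D2ᶜ = 0 ∧
  ∀ x : Euc n, ∃ U : Set (Euc n), IsOpen U ∧ x ∈ U ∧
    Bornology.IsBounded ((fun y => fderiv ℝ (fderiv ℝ f) y) '' (U ∩ D2))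

open MeasureTheory
open scoped NNReal

section ConvexHull

variable {E : Type*} [NormedAddCommGroup E] [NormedSpace ℝ E] [FiniteDimensional ℝ E]

def convexCombinations (s : Set E) (k : ℕ) : Set E :=
  (fun p : (Fin k → ℝ) × (Fin k → E) => ∑ i, p.1 i • p.2 i) ''
    (stdSimplex ℝ (Fin k) ×ˢ univ.pi fun _ => s)

omit [FiniteDimensional ℝ E] in
theorem IsCompact.convexCombinations {s : Set E} (hs : IsCompact s) (k : ℕ) :
    IsCompact (convexCombinations s k) :=
  ((isCompact_stdSimplex ℝ (Fin k)).prod (isCompact_univ_pi fun _ => hs)).image <| by fun_prop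

theorem convexHull_eq_biUnion_convexCombinations (s : Set E) :
    convexHull ℝ s = ⋃ k ∈ Finset.range (Module.finrank ℝ E + 2), convexCombinations s k := by
  refine Subset.antisymm (fun x hx => ?_) (iUnion₂_subset fun k _ => ?_)
  · obtain ⟨ι, _, z, w, hzs, hz, hw0, hw1, rfl⟩ := eq_pos_convex_span_of_mem_convexHull hx
    have hcard : Fintype.card ι < Module.finrank ℝ E + 2 := Nat.lt_succ_of_le
      (hz.card_le_finrank_succ.trans (Nat.add_le_add_right (Submodule.finrank_le _) 1))
    let e := Fintype.equivFin ι
    refine mem_iUnion₂.2 ⟨_, Finset.mem_range.2 hcard, (w ∘ e.symm, z ∘ e.symm),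
      ⟨⟨fun i => (hw0 _).le, ?_⟩, fun i _ => hzs (mem_range_self _)⟩, ?_⟩
    · simpa using (e.symm.sum_comp w).trans hw1
    · exact e.symm.sum_comp fun i => w i • z i
  · rintro _ ⟨⟨w, z⟩, ⟨hw, hz⟩, rfl⟩
    exact mem_convexHull_of_exists_fintype w z hw.1 hw.2 (fun i => hz i (mem_univ i)) rfl

theorem IsCompact.convexHull {s : Set E} (hs : IsCompact s) : IsCompact (convexHull ℝ s) := by
  rw [convexHull_eq_biUnion_convexCombinations]
  exact (Finset.range _).isCompact_biUnion fun k _ => hs.convexCombinations k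

theorem iInter_convexHull_subset_convexHull_iInter {ι : Type*} {K : ι → Set E}
    (hd : Directed (· ⊇ ·) K) (hK : ∀ i, IsCompact (K i)) :
    ⋂ i, convexHull ℝ (K i) ⊆ convexHull ℝ (⋂ i, K i) := by
  intro g hg
  rcases isEmpty_or_nonempty ι with hι | hι
  · simp
  have ⟨i₀⟩ := hι
  by_contra hgK
  have hcomp : IsCompact (⋂ i, K i) :=
    (hK i₀).of_isClosed_subset (isClosed_iInter fun i => (hK i).isClosed) (iInter_subset _ i₀)
  obtain ⟨Φ, u, hΦ, hΦg⟩ := geometric_hahn_banach_closed_point (convex_convexHull ℝ _)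
    hcomp.convexHull.isClosed hgK
  have hfar : ∀ i, IsCompact (K i ∩ {ξ | u ≤ Φ ξ}) :=
    fun i => (hK i).inter_right (isClosed_le continuous_const Φ.continuous)
  have hne : ∀ i, (K i ∩ {ξ | u ≤ Φ ξ}).Nonempty := fun i => by
    by_contra hempty
    have hlt : K i ⊆ {ξ | Φ ξ < u} := fun ξ hξ => not_le.1 fun (h : u ≤ Φ ξ) => hempty ⟨ξ, hξ, h⟩
    exact (convexHull_min hlt (convex_halfSpace_lt Φ.isLinear u) (mem_iInter.1 hg i)).not_gt hΦg
  obtain ⟨ξ, hξ⟩ := IsCompact.nonempty_iInter_of_directed_nonempty_isCompact_isClosed _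
    (fun i j => (hd i j).imp fun _ h =>
      ⟨inter_subset_inter_left _ h.1, inter_subset_inter_left _ h.2⟩) hne hfar
    fun i => (hfar i).isClosed
  rw [← iInter_inter] at hξ
  exact (hΦ ξ (subset_convexHull ℝ _ hξ.1)).not_ge hξ.2

theorem exists_forall_apply_lt_of_notMem_convexHull {C : Set (E →L[ℝ] ℝ)} (hC : IsCompact C)
    {ξ₀ : E →L[ℝ] ℝ} (hξ₀ : ξ₀ ∉ convexHull ℝ C) :
    ∃ v : E, ∃ u : ℝ, (∀ ξ ∈ C, ξ v < u) ∧ u < ξ₀ v := by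
  obtain ⟨Φ, u, hΦ, hΦξ₀⟩ :=
    geometric_hahn_banach_closed_point (convex_convexHull ℝ C) hC.convexHull.isClosed hξ₀
  let e : (E →ₗ[ℝ] ℝ) ≃ₗ[ℝ] (E →L[ℝ] ℝ) := LinearMap.toContinuousLinearMap
  set v := (Module.evalEquiv ℝ E).symm (Φ.toLinearMap ∘ₗ e.toLinearMap)
  have hv : ∀ ξ : E →L[ℝ] ℝ, Φ ξ = ξ v := fun ξ =>
    (Module.apply_evalEquiv_symm_apply ℝ E ξ.toLinearMap (Φ.toLinearMap ∘ₗ e.toLinearMap)).symm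
  exact ⟨v, u, fun ξ hξ => hv ξ ▸ hΦ ξ (subset_convexHull ℝ C hξ), hv ξ₀ ▸ hΦξ₀⟩

end ConvexHull

theorem image_iInter_of_directed_isCompact {X Y ι : Type*} [TopologicalSpace X] [T2Space X]
    [TopologicalSpace Y] [T1Space Y] [Nonempty ι] {K : ι → Set X} (hd : Directed (· ⊇ ·) K)
    (hK : ∀ i, IsCompact (K i)) {π : X → Y} (hπ : Continuous π) :
    π '' ⋂ i, K i = ⋂ i, π '' K i := by
  refine Subset.antisymm (image_iInter_subset _ _) fun y hy => ?_
  have hfiber : ∀ i, IsCompact (K i ∩ π ⁻¹' {y}) :=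
    fun i => (hK i).inter_right (isClosed_singleton.preimage hπ)
  obtain ⟨x, hx⟩ := IsCompact.nonempty_iInter_of_directed_nonempty_isCompact_isClosed
    (fun i => K i ∩ π ⁻¹' {y}) (fun i j => (hd i j).imp fun _ h =>
      ⟨inter_subset_inter_left _ h.1, inter_subset_inter_left _ h.2⟩)
    (fun i => mem_iInter.1 hy i) hfiber fun i => (hfiber i).isClosed
  rw [← iInter_inter] at hx
  exact ⟨x, hx⟩

theorem IsCompact.isBounded_image_inter {X Y : Type*} [TopologicalSpace X] [Bornology Y]
    {φ : X → Y} {D K : Set X} (hK : IsCompact K)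
    (hloc : ∀ x ∈ K, ∃ U ∈ 𝓝 x, Bornology.IsBounded (φ '' (U ∩ D))) :
    Bornology.IsBounded (φ '' (K ∩ D)) := by
  refine hK.induction_on (p := fun s => Bornology.IsBounded (φ '' (s ∩ D))) (by simp)
    (fun s t hst ht => ht.subset (image_mono (inter_subset_inter_left _ hst)))
    (fun s t hs ht => by simpa [union_inter_distrib_right, image_union] using hs.union ht)
    fun x hx => ?_
  obtain ⟨U, hU, hUb⟩ := hloc x hx
  exact ⟨U, mem_nhdsWithin_of_mem_nhds hU, hUb⟩

theorem monotone_closure_image_closedBall_inter {X Y : Type*} [PseudoMetricSpace X]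
    [TopologicalSpace Y] (φ : X → Y) (x : X) (D : Set X) :
    Monotone fun δ => closure (φ '' (closedBall x δ ∩ D)) := fun _ _ h =>
  closure_mono (image_mono (inter_subset_inter_left _ (closedBall_subset_closedBall h)))

theorem LipschitzOnWith.sub_le_mul_of_ae_deriv_le {g : ℝ → ℝ} {K : ℝ≥0} {a b M : ℝ}
    (hab : a ≤ b) (hg : LipschitzOnWith K g (Icc a b))
    (hd : ∀ᵐ s, s ∈ Ioo a b → deriv g s ≤ M) : g b - g a ≤ M * (b - a) := by
  have hac := (uIcc_of_le hab ▸ hg).absolutelyContinuousOnInterval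
  have hle : deriv g ≤ᵐ[volume.restrict (Icc a b)] fun _ => M := by
    rw [← Measure.restrict_congr_set Ioo_ae_eq_Icc]
    exact (ae_restrict_iff' measurableSet_Ioo).2 hd
  calc g b - g a = ∫ s in a..b, deriv g s := hac.integral_deriv_eq_sub.symm
    _ ≤ ∫ _ in a..b, M :=
      intervalIntegral.integral_mono_ae_restrict hab hac.intervalIntegrable_deriv
        intervalIntegrable_const hle
    _ = M * (b - a) := by simp [mul_comm]

theorem LocallyLipschitz.isBounded_image_fderiv {E F : Type*} [NormedAddCommGroup E]
    [NormedSpace ℝ E] [NormedAddCommGroup F] [NormedSpace ℝ F] {f : E → F}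
    (hf : LocallyLipschitz f) {K : Set E} (hK : IsCompact K) :
    Bornology.IsBounded (fderiv ℝ f '' K) := by
  simpa using hK.isBounded_image_inter (D := univ) fun x _ => by
    obtain ⟨C, W, hW, hfW⟩ := hf x
    refine ⟨interior W, interior_mem_nhds.2 hW, (isBounded_iff_forall_norm_le.2 ⟨C, ?_⟩)⟩
    rintro _ ⟨z, hz, rfl⟩
    exact norm_fderiv_le_of_lipschitzOn ℝ (mem_interior_iff_mem_nhds.1 hz.1) hfW

theorem LocallyLipschitz.isCompact_closure_image_fderiv_inter {E : Type*} [NormedAddCommGroup E]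
    [NormedSpace ℝ E] [FiniteDimensional ℝ E] {f : E → ℝ} (hf : LocallyLipschitz f) {K : Set E}
    (hK : IsCompact K) (D : Set E) : IsCompact (closure (fderiv ℝ f '' (K ∩ D))) :=
  ((hf.isBounded_image_fderiv hK).subset (image_mono inter_subset_left)).isCompact_closure

section Lipschitz

variable {E : Type*} [NormedAddCommGroup E] [NormedSpace ℝ E] [FiniteDimensional ℝ E]
  [MeasurableSpace E] [BorelSpace E] {μ : Measure E} [μ.IsAddHaarMeasure]

theorem exists_mem_ball_ae_add_smul_mem {p : E → Prop} (hp : ∀ᵐ z ∂μ, p z) (v y : E)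
    {η : ℝ} (hη : 0 < η) : ∃ w ∈ ball y η, ∀ᵐ s : ℝ, p (w + s • v) := by
  obtain ⟨T, hT, hTm, hTp⟩ := hp.exists_measurable_mem
  have hline : ∀ᵐ w ∂μ, ∀ᵐ s : ℝ, w + LinearMap.toSpanSingleton ℝ E v s ∈ T :=
    (ae_ae_add_linearMap_mem_iff _ volume μ hTm).2 hT
  obtain ⟨w, hw, hws⟩ := Measure.exists_mem_of_measure_ne_zero_of_ae
    (measure_ball_pos μ y hη).ne' (ae_restrict_of_ae hline)
  exact ⟨w, hw, hws.mono fun s hs => hTp _ (by simpa using hs)⟩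

omit [FiniteDimensional ℝ E] [MeasurableSpace E] [BorelSpace E] in
theorem DifferentiableAt.hasDerivAt_comp_add_smul {F : Type*} [NormedAddCommGroup F]
    [NormedSpace ℝ F] {f : E → F} {w v : E} {s : ℝ} (hf : DifferentiableAt ℝ f (w + s • v)) :
    HasDerivAt (fun s : ℝ => f (w + s • v)) (fderiv ℝ f (w + s • v) v) s :=
  hf.hasFDerivAt.comp_hasDerivAt s (by simpa using ((hasDerivAt_id s).smul_const v).const_add w)

theorem LipschitzOnWith.sub_le_of_ae_fderiv_apply_le {f : E → ℝ} {K : ℝ≥0} {U : Set E}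
    (hU : IsOpen U) (hf : LipschitzOnWith K f U) {v : E} {u : ℝ}
    (hd : ∀ᵐ z ∂μ, z ∈ U → DifferentiableAt ℝ f z ∧ fderiv ℝ f z v ≤ u) {y : E} {t : ℝ}
    (ht : 0 ≤ t) (hseg : ∀ s ∈ Icc 0 t, y + s • v ∈ U) : f (y + t • v) - f y ≤ u * t := by
  have hline : ∀ w : E, LipschitzWith ‖v‖₊ fun s : ℝ => w + s • v := fun w =>
    LipschitzWith.of_dist_le_mul fun s s' => by
      simp [dist_eq_norm, ← sub_smul, norm_smul, mul_comm]
  obtain ⟨δ, hδ, hδU⟩ := (isCompact_Icc.image (hline y).continuous).exists_thickening_subset_open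
    hU (image_subset_iff.2 hseg)
  -- Integrate along a line through a nearby `w` on which the bound holds a.e., then return to
  -- `y` by Lipschitz continuity.
  have hnear : ∀ η ∈ Ioo 0 δ, f (y + t • v) - f y ≤ u * t + 2 * K * η := by
    rintro η ⟨hη, hηδ⟩
    obtain ⟨w, hw, hws⟩ := exists_mem_ball_ae_add_smul_mem hd v y hη
    have hwy : dist w y < η := mem_ball.1 hw
    have hwseg : ∀ s ∈ Icc 0 t, w + s • v ∈ U := fun s hs => hδU <| mem_thickening_iff.2
      ⟨y + s • v, mem_image_of_mem _ hs, by rw [dist_add_right]; exact hwy.trans hηδ⟩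
    have hderiv : ∀ᵐ s, s ∈ Ioo 0 t → deriv (fun s : ℝ => f (w + s • v)) s ≤ u := by
      filter_upwards [hws] with s hs hst
      obtain ⟨hdiff, hle⟩ := hs (hwseg s (Ioo_subset_Icc_self hst))
      rwa [hdiff.hasDerivAt_comp_add_smul.deriv]
    have hwline : f (w + t • v) - f w ≤ u * t := by
      simpa using (hf.comp (hline w).lipschitzOnWith hwseg).sub_le_mul_of_ae_deriv_le ht hderiv
    have hend := hf.dist_le_mul _ (hwseg t ⟨ht, le_rfl⟩) _ (hseg t ⟨ht, le_rfl⟩)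
    have hstart := hf.dist_le_mul _ (hwseg 0 ⟨le_rfl, ht⟩) _ (hseg 0 ⟨le_rfl, ht⟩)
    rw [dist_add_right, Real.dist_eq] at hend
    rw [zero_smul, add_zero, add_zero, Real.dist_eq] at hstart
    have hKη : (K : ℝ) * dist w y ≤ K * η := mul_le_mul_of_nonneg_left hwy.le K.coe_nonneg
    linarith [abs_le.1 (hend.trans hKη), abs_le.1 (hstart.trans hKη)]
  refine ge_of_tendsto (f := fun η => u * t + 2 * K * η) (x := 𝓝[>] 0) ?_
    (eventually_of_mem (Ioo_mem_nhdsGT hδ) hnear)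
  exact ((Continuous.tendsto (by fun_prop) 0).mono_left nhdsWithin_le_nhds).trans (by simp)

theorem LipschitzOnWith.fderiv_apply_le_of_ae {f : E → ℝ} {K : ℝ≥0} {U : Set E}
    (hU : IsOpen U) (hf : LipschitzOnWith K f U) {v : E} {u : ℝ}
    (hd : ∀ᵐ z ∂μ, z ∈ U → DifferentiableAt ℝ f z ∧ fderiv ℝ f z v ≤ u) {y : E} (hy : y ∈ U)
    (hfy : DifferentiableAt ℝ f y) : fderiv ℝ f y v ≤ u := by
  have hline : HasDerivAt (fun t : ℝ => f (y + t • v)) (fderiv ℝ f y v) 0 := by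
    simpa using (show DifferentiableAt ℝ f (y + (0 : ℝ) • v) by simpa using hfy)
      |>.hasDerivAt_comp_add_smul
  have hU0 : (fun t : ℝ => y + t • v) ⁻¹' U ∈ 𝓝 0 :=
    (hU.preimage (by fun_prop)).mem_nhds (by simpa using hy)
  obtain ⟨r, hr, hrU⟩ := Metric.mem_nhds_iff.1 hU0
  refine le_of_tendsto (hasDerivAt_iff_tendsto_slope_left_right.1 hline).2 ?_
  filter_upwards [Ioo_mem_nhdsGT hr] with t ht
  have hseg : ∀ s ∈ Icc 0 t, y + s • v ∈ U := fun s hs => hrU <| by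
    rw [mem_ball, Real.dist_eq, sub_zero, abs_of_nonneg hs.1]
    exact hs.2.trans_lt ht.2
  rw [slope_def_field, zero_smul, add_zero, sub_zero, div_le_iff₀ ht.1]
  exact hf.sub_le_of_ae_fderiv_apply_le hU hd ht.1.le hseg

theorem LocallyLipschitz.fderiv_mem_convexHull_closure_image_ball_inter {f : E → ℝ}
    (hf : LocallyLipschitz f) {S : Set E} (hS : ∀ᵐ z ∂μ, z ∈ S)
    (hSd : ∀ z ∈ S, DifferentiableAt ℝ f z) {y : E} (hy : DifferentiableAt ℝ f y) {r : ℝ}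
    (hr : 0 < r) : fderiv ℝ f y ∈ convexHull ℝ (closure (fderiv ℝ f '' (ball y r ∩ S))) := by
  obtain ⟨K, W, hW, hfW⟩ := hf y
  obtain ⟨ρ, hρ, hρW⟩ := Metric.mem_nhds_iff.1 hW
  set U := ball y (min ρ r)
  have hUr : U ⊆ ball y r := ball_subset_ball (min_le_right _ _)
  have hfU : LipschitzOnWith K f U := hfW.mono ((ball_subset_ball (min_le_left _ _)).trans hρW)
  have hbdd : fderiv ℝ f '' (U ∩ S) ⊆ closedBall 0 K := by
    rintro _ ⟨z, hz, rfl⟩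
    exact mem_closedBall_zero_iff.2
      (norm_fderiv_le_of_lipschitzOn ℝ (isOpen_ball.mem_nhds hz.1) hfU)
  have hC : IsCompact (closure (fderiv ℝ f '' (U ∩ S))) :=
    (isCompact_closedBall _ _).closure_of_subset hbdd
  refine convexHull_mono (closure_mono (image_mono (inter_subset_inter_left _ hUr))) ?_
  by_contra hy'
  obtain ⟨v, u, hlt, hu⟩ := exists_forall_apply_lt_of_notMem_convexHull hC hy'
  have hle : ∀ᵐ z ∂μ, z ∈ U → DifferentiableAt ℝ f z ∧ fderiv ℝ f z v ≤ u :=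
    hS.mono fun z hz hzU => ⟨hSd z hz, (hlt _ (subset_closure ⟨z, ⟨hzU, hz⟩, rfl⟩)).le⟩
  exact (hfU.fderiv_apply_le_of_ae isOpen_ball hle (mem_ball_self (lt_min hρ hr)) hy).not_gt hu

end Lipschitz

namespace StandingAssumptions

variable {f : Euc n → ℝ} {D2 : Set (Euc n)}

theorem differentiableAt (hf : StandingAssumptions f D2) {z : Euc n} (hz : z ∈ D2) :
    DifferentiableAt ℝ f z := by
  rw [hf.2.1] at hz
  exact hz.1

theorem isCompact_closure_jetMap_image (hf : StandingAssumptions f D2) {K : Set (Euc n)}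
    (hK : IsCompact K) : IsCompact (closure (jetMap f '' (K ∩ D2))) := by
  obtain ⟨hlip, -, -, hhess⟩ := hf
  have : ProperSpace (Euc n →L[ℝ] Euc n →L[ℝ] ℝ) :=
    FiniteDimensional.proper ℝ (Euc n →L[ℝ] Euc n →L[ℝ] ℝ)
  have hhessK : Bornology.IsBounded (fderiv ℝ (fderiv ℝ f) '' (K ∩ D2)) :=
    hK.isBounded_image_inter fun x _ => by
      obtain ⟨U, hU, hxU, hUb⟩ := hhess x
      exact ⟨U, hU.mem_nhds hxU, hUb⟩
  refine (hK.prod ((hK.image_of_continuousOn hlip.continuous.continuousOn).prod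
    ((hlip.isBounded_image_fderiv hK).isCompact_closure.prod
      hhessK.isCompact_closure))).closure_of_subset ?_
  rintro _ ⟨z, hz, rfl⟩
  exact ⟨hz.1, mem_image_of_mem _ hz.1, subset_closure (mem_image_of_mem _ hz.1),
    subset_closure (mem_image_of_mem _ hz)⟩

theorem image_jet_eq (hf : StandingAssumptions f D2) (ε : ℝ) (x : Euc n) :
    (fun j : JetSpace n => j.2.2.1) '' jet f D2 ε x =
      ⋂ δ ∈ Ioi ε, closure (fderiv ℝ f '' (closedBall x δ ∩ D2)) := by
  have hπ : Continuous fun j : JetSpace n => j.2.2.1 := by fun_prop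
  have hcomp : ∀ δ, IsCompact (closure (jetMap f '' (closedBall x δ ∩ D2))) :=
    fun δ => hf.isCompact_closure_jetMap_image (isCompact_closedBall x δ)
  have hmono : Monotone fun δ : Ioi ε => closure (jetMap f '' (closedBall x δ ∩ D2)) :=
    (monotone_closure_image_closedBall_inter (jetMap f) x D2).comp (Subtype.mono_coe _)
  simp only [jet, biInter_eq_iInter]
  rw [image_iInter_of_directed_isCompact hmono.directed_ge (fun δ => hcomp δ) hπ]
  refine iInter_congr fun δ => ?_
  rw [image_closure_of_isCompact (hcomp δ) hπ.continuousOn, image_image]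
  rfl

theorem closure_gradients_subset_convexHull (hf : StandingAssumptions f D2) {x : Euc n}
    {δ δ' : ℝ} (h : δ < δ') :
    closure {g | ∃ y ∈ closedBall x δ, DifferentiableAt ℝ f y ∧ g = fderiv ℝ f y} ⊆
      convexHull ℝ (closure (fderiv ℝ f '' (closedBall x δ' ∩ D2))) := by
  refine closure_minimal ?_
    (hf.1.isCompact_closure_image_fderiv_inter (isCompact_closedBall x δ') D2).convexHull.isClosed
  rintro _ ⟨y, hy, hdy, rfl⟩
  have hball : ball y (δ' - δ) ⊆ closedBall x δ' := ball_subset_closedBall.trans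
    (closedBall_subset_closedBall' (by linarith [mem_closedBall.1 hy]))
  exact convexHull_mono (closure_mono (image_mono (inter_subset_inter_left _ hball)))
    (hf.1.fderiv_mem_convexHull_closure_image_ball_inter (mem_ae_iff.2 hf.2.2.1)
      (fun z => hf.differentiableAt) hdy (sub_pos.2 h))

end StandingAssumptions

theorem jet_proj_gradient_general (f : Euc n → ℝ) (D2 : Set (Euc n))
    (hf : StandingAssumptions f D2) (x : Euc n) (ε : ℝ) :
    convexHull ℝ ((fun j : JetSpace n => j.2.2.1) '' jet f D2 ε x) = goldstein f ε x := by
  rw [hf.image_jet_eq, goldstein]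
  refine Subset.antisymm (convexHull_mono (biInter_mono subset_rfl fun δ _ => closure_mono ?_))
    (convexHull_min ?_ (convex_convexHull ℝ _))
  · rintro _ ⟨z, hz, rfl⟩
    exact ⟨z, hz.1, hf.differentiableAt hz.2, rfl⟩
  have hmono : Monotone fun δ : Ioi ε => closure (fderiv ℝ f '' (closedBall x δ ∩ D2)) :=
    (monotone_closure_image_closedBall_inter (fderiv ℝ f) x D2).comp (Subtype.mono_coe _)
  calc _ ⊆ ⋂ δ' ∈ Ioi ε, convexHull ℝ (closure (fderiv ℝ f '' (closedBall x δ' ∩ D2))) :=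
        subset_iInter₂ fun δ' (hδ' : ε < δ') =>
          (biInter_subset_of_mem (mem_Ioi.2 (by linarith : ε < (ε + δ') / 2))).trans
            (hf.closure_gradients_subset_convexHull (by linarith))
    _ ⊆ _ := by
      simp only [biInter_eq_iInter]
      exact iInter_convexHull_subset_convexHull_iInter hmono.directed_ge
        fun δ => hf.1.isCompact_closure_image_fderiv_inter (isCompact_closedBall x δ) D2

theorem jet_proj_gradient (f : Euc n → ℝ) (D2 : Set (Euc n))
    (hf : StandingAssumptions f D2) (x : Euc n) (ε : ℝ) (hε : 0 ≤ ε) :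
    convexHull ℝ ((fun j : JetSpace n => j.2.2.1) '' jet f D2 ε x) = goldstein f ε x :=
  jet_proj_gradient_general f D2 hf x ε
end
end

section
/- Let f : ℝⁿ → ℝ be convex and satisfy the standing jet assumptions. Let (xⁱ) → x̄ in ℝⁿ and (εᵢ) be positive with εᵢ → 0. If limsup_{i→∞} (θ(xⁱ, εᵢ) − f(xⁱ))/εᵢ ≥ 0, where θ(x,ε) := min_{z ∈ B_ε(x)} 𝒯_{x,ε}(z), then x̄ is a global minimizer of f. -/
/-!
Suppose `f z < f x̄`. By convexity, the point at distance `εᵢ` from `xⁱ` on the segment towards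
`z` lowers `f` by about `εᵢ (f z - f xⁱ) / ‖z - xⁱ‖`, while every polynomial of the jet overestimates
`f` by at most `O(εᵢ²)`: the subgradient inequality controls its affine part and the locally bounded
Hessians its quadratic part. So `(θ(xⁱ, εᵢ) - f xⁱ) / εᵢ` is eventually below a quantity tending to
`(f z - f x̄) / ‖z - x̄‖ < 0`. Local Lipschitz continuity bounds these quotients from below, so their
limit superior is that of a bounded sequence and is negative.
-/

open Metric Set Filter Topology

noncomputable section

variable {n : ℕ}

theorem ConvexOn.add_fderiv_le {E : Type*} [NormedAddCommGroup E] [NormedSpace ℝ E]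
    {s : Set E} {f : E → ℝ} (hf : ConvexOn ℝ s f) {y z : E} (hy : y ∈ s) (hz : z ∈ s)
    (hdiff : DifferentiableAt ℝ f y) : f y + fderiv ℝ f y (z - y) ≤ f z := by
  set L : ℝ →ᵃ[ℝ] E := AffineMap.lineMap y z
  have hline : ConvexOn ℝ (L ⁻¹' s) (f ∘ L) := hf.comp_affineMap L
  have hderiv : HasDerivAt (f ∘ L) (fderiv ℝ f y (z - y)) 0 := by
    have hfy : HasFDerivAt f (fderiv ℝ f y) (L 0) := by simpa [L] using hdiff.hasFDerivAt
    exact hfy.comp_hasDerivAt 0 AffineMap.hasDerivAt_lineMap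
  have := hline.le_slope_of_hasDerivAt (by simpa [L]) (by simpa [L]) one_pos hderiv
  simp only [slope_def_field, Function.comp_apply, L, AffineMap.lineMap_apply_zero,
    AffineMap.lineMap_apply_one, sub_zero, div_one] at this
  linarith

theorem ConvexOn.exists_mem_closedBall_le {E : Type*} [NormedAddCommGroup E] [NormedSpace ℝ E]
    {f : E → ℝ} (hf : ConvexOn ℝ univ f) {x w : E} {ε : ℝ} (hε : 0 < ε) (hw : ε ≤ ‖w - x‖) :
    ∃ z ∈ closedBall x ε, f z ≤ f x + ε / ‖w - x‖ * (f w - f x) := by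
  set t := ε / ‖w - x‖
  have ht₀ : 0 < t := div_pos hε (hε.trans_le hw)
  have ht₁ : t ≤ 1 := (div_le_one (hε.trans_le hw)).2 hw
  refine ⟨AffineMap.lineMap x w t, ?_, ?_⟩
  · rw [mem_closedBall, dist_lineMap_left, Real.norm_of_nonneg ht₀.le, dist_eq_norm']
    exact (div_mul_cancel₀ ε (hε.trans_le hw).ne').le
  · have := hf.2 (mem_univ x) (mem_univ w) (sub_nonneg.2 ht₁) ht₀.le (sub_add_cancel 1 t)
    rw [← AffineMap.lineMap_apply_module] at this
    simp only [smul_eq_mul] at this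
    linarith

lemma ContinuousLinearMap.abs_apply_apply_le {E : Type*} [NormedAddCommGroup E]
    [NormedSpace ℝ E] (H : E →L[ℝ] E →L[ℝ] ℝ) (v : E) : |H v v| ≤ ‖H‖ * ‖v‖ ^ 2 := by
  simpa [sq, mul_assoc] using H.le_opNorm₂ v v

lemma Dense.inter_closedBall_nonempty {X : Type*} [PseudoMetricSpace X] {s : Set X}
    (hs : Dense s) (x : X) {ε : ℝ} (hε : 0 < ε) : (closedBall x ε ∩ s).Nonempty :=
  (hs.inter_open_nonempty _ isOpen_ball (nonempty_ball.2 hε)).mono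
    (inter_subset_inter_left _ ball_subset_closedBall)

lemma Filter.Tendsto.eventually_closedBall_subset {ι X : Type*} [PseudoMetricSpace X]
    {l : Filter ι} {x : ι → X} {a : X} {r : ι → ℝ} {S : Set X} (hx : Tendsto x l (𝓝 a))
    (hr : Tendsto r l (𝓝 0)) (hS : S ∈ 𝓝 a) : ∀ᶠ i in l, closedBall (x i) (r i) ⊆ S := by
  obtain ⟨ρ, hρ, hρS⟩ := nhds_basis_closedBall.mem_iff.1 hS
  filter_upwards [hx (ball_mem_nhds a (half_pos hρ)), hr (Iio_mem_nhds (half_pos hρ))]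
    with i hxi hri
  refine (closedBall_subset_closedBall' ?_).trans hρS
  have : dist (x i) a < ρ / 2 := hxi
  have : r i < ρ / 2 := hri
  linarith

lemma Qpoly_jetMap_le_of_convexOn {f : Euc n → ℝ} (hf : ConvexOn ℝ univ f) {y : Euc n}
    (hy : DifferentiableAt ℝ f y) (z : Euc n) :
    Qpoly (jetMap f y) z ≤ f z + 1 / 2 * (‖fderiv ℝ (fderiv ℝ f) y‖ * ‖z - y‖ ^ 2) := by
  have hsub := hf.add_fderiv_le (mem_univ y) (mem_univ z) hy
  have hhess := (abs_le.1 ((fderiv ℝ (fderiv ℝ f) y).abs_apply_apply_le (z - y))).2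
  simp only [Qpoly, jetMap]
  linarith

lemma sub_le_Qpoly (j : JetSpace n) (z : Euc n) :
    j.2.1 - ‖j.2.2.1‖ * ‖z - j.1‖ - 1 / 2 * (‖j.2.2.2‖ * ‖z - j.1‖ ^ 2) ≤ Qpoly j z := by
  have hlin := (abs_le.1 ((j.2.2.1 (z - j.1)).norm_eq_abs ▸ j.2.2.1.le_opNorm (z - j.1))).1
  have hhess := (abs_le.1 (j.2.2.2.abs_apply_apply_le (z - j.1))).1
  simp only [Qpoly]
  linarith

set_option synthInstance.maxHeartbeats 400000 in
lemma continuous_Qpoly_left (z : Euc n) : Continuous fun j : JetSpace n => Qpoly j z := by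
  unfold Qpoly
  fun_prop

section Jet

variable {f : Euc n → ℝ} {D2 : Set (Euc n)} {ε : ℝ} {x : Euc n}

lemma jetMap_mem_jet {y : Euc n} (hy : y ∈ closedBall x ε ∩ D2) : jetMap f y ∈ jet f D2 ε x :=
  mem_iInter₂.2 fun _ hδ =>
    subset_closure ⟨y, ⟨closedBall_subset_closedBall (le_of_lt hδ) hy.1, hy.2⟩, rfl⟩

lemma Qpoly_le_of_mem_jet {δ b : ℝ} {z : Euc n} (hεδ : ε < δ)
    (h : ∀ y ∈ closedBall x δ ∩ D2, Qpoly (jetMap f y) z ≤ b) {j : JetSpace n}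
    (hj : j ∈ jet f D2 ε x) : Qpoly j z ≤ b := by
  have hj' : j ∈ closure (jetMap f '' (closedBall x δ ∩ D2)) := mem_iInter₂.1 hj δ hεδ
  refine (isClosed_le (continuous_Qpoly_left z) continuous_const).closure_subset_iff.2 ?_ hj'
  rintro _ ⟨y, hy, rfl⟩
  exact h y hy

variable {g : Euc n → ℝ} {j₀ : JetSpace n}

lemma model_le (hj₀ : j₀ ∈ jet f D2 ε x)
    (hup : ∀ j ∈ jet f D2 ε x, ∀ z ∈ closedBall x ε, Qpoly j z ≤ g z)
    {z : Euc n} (hz : z ∈ closedBall x ε) : model f D2 ε x z ≤ g z :=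
  csSup_le (Set.Nonempty.image _ ⟨j₀, hj₀⟩) (by
    rintro _ ⟨j, hj, rfl⟩
    exact hup j hj z hz)

lemma Qpoly_le_model (hup : ∀ j ∈ jet f D2 ε x, ∀ z ∈ closedBall x ε, Qpoly j z ≤ g z)
    {z : Euc n} (hz : z ∈ closedBall x ε) (hj₀ : j₀ ∈ jet f D2 ε x) :
    Qpoly j₀ z ≤ model f D2 ε x z :=
  le_csSup ⟨g z, by rintro _ ⟨j, hj, rfl⟩; exact hup j hj z hz⟩ (mem_image_of_mem _ hj₀)

lemma le_theta {b : ℝ} (hε : 0 ≤ ε) (hj₀ : j₀ ∈ jet f D2 ε x)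
    (hlow : ∀ z ∈ closedBall x ε, b ≤ Qpoly j₀ z)
    (hup : ∀ j ∈ jet f D2 ε x, ∀ z ∈ closedBall x ε, Qpoly j z ≤ g z) :
    b ≤ theta f D2 ε x :=
  le_csInf ((nonempty_closedBall.2 hε).image _) (by
    rintro _ ⟨z, hz, rfl⟩
    exact (hlow z hz).trans (Qpoly_le_model hup hz hj₀))

lemma theta_le {b : ℝ} (hj₀ : j₀ ∈ jet f D2 ε x) (hlow : ∀ z ∈ closedBall x ε, b ≤ Qpoly j₀ z)
    (hup : ∀ j ∈ jet f D2 ε x, ∀ z ∈ closedBall x ε, Qpoly j z ≤ g z)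
    {z : Euc n} (hz : z ∈ closedBall x ε) : theta f D2 ε x ≤ g z := by
  have hbdd : BddBelow (model f D2 ε x '' closedBall x ε) := ⟨b, by
    rintro _ ⟨z, hz, rfl⟩
    exact (hlow z hz).trans (Qpoly_le_model hup hz hj₀)⟩
  exact (csInf_le hbdd (mem_image_of_mem _ hz)).trans (model_le hj₀ hup hz)

end Jet

section Convex

variable {f : Euc n → ℝ} {D2 : Set (Euc n)} {ε M : ℝ} {x : Euc n}

lemma Qpoly_le_of_mem_jet_of_convexOn (hf : ConvexOn ℝ univ f)
    (hD2 : ∀ y ∈ D2, DifferentiableAt ℝ f y) (hε : 0 < ε)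
    (hHess : ∀ y ∈ closedBall x (2 * ε) ∩ D2, ‖fderiv ℝ (fderiv ℝ f) y‖ ≤ M) :
    ∀ j ∈ jet f D2 ε x, ∀ z ∈ closedBall x ε, Qpoly j z ≤ f z + 9 / 2 * M * ε ^ 2 := by
  intro j hj z hz
  refine Qpoly_le_of_mem_jet (by linarith : ε < 2 * ε) (fun y hy => ?_) hj
  have hzy : ‖z - y‖ ≤ 3 * ε := by
    rw [← dist_eq_norm]
    linarith [dist_triangle z x y, mem_closedBall.1 hz, mem_closedBall'.1 hy.1]
  have hH := hHess y hy
  have hterm : ‖fderiv ℝ (fderiv ℝ f) y‖ * ‖z - y‖ ^ 2 ≤ M * (3 * ε) ^ 2 :=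
    mul_le_mul hH (pow_le_pow_left₀ (norm_nonneg _) hzy 2) (by positivity)
      ((norm_nonneg (fderiv ℝ (fderiv ℝ f) y)).trans hH)
  linarith [Qpoly_jetMap_le_of_convexOn hf (hD2 y hy.2) z]

lemma sub_le_Qpoly_jetMap_of_lipschitzOn {K : NNReal} (hε : 0 < ε)
    (hlip : LipschitzOnWith K f (closedBall x (2 * ε))) {y : Euc n} (hy : y ∈ closedBall x ε)
    (hH : ‖fderiv ℝ (fderiv ℝ f) y‖ ≤ M) :
    ∀ z ∈ closedBall x ε, f x - 3 * K * ε - 2 * M * ε ^ 2 ≤ Qpoly (jetMap f y) z := by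
  intro z hz
  have hyx : dist y x ≤ ε := hy
  have hfy : f x - K * ε ≤ f y := by
    have hdist := hlip.dist_le_mul x (mem_closedBall_self (by linarith)) y
      (closedBall_subset_closedBall (by linarith) hy)
    rw [Real.dist_eq, dist_comm] at hdist
    nlinarith [(abs_le.1 hdist).2, K.coe_nonneg]
  have hgrad : ‖fderiv ℝ f y‖ ≤ K :=
    norm_fderiv_le_of_lipschitzOn ℝ (closedBall_mem_nhds_of_mem (mem_ball.2 (by linarith))) hlip
  have hzy : ‖z - y‖ ≤ 2 * ε := by
    rw [← dist_eq_norm]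
    linarith [dist_triangle z x y, mem_closedBall.1 hz, dist_comm x y]
  have hlin : ‖fderiv ℝ f y‖ * ‖z - y‖ ≤ K * (2 * ε) :=
    mul_le_mul hgrad hzy (norm_nonneg _) K.coe_nonneg
  have hterm : ‖fderiv ℝ (fderiv ℝ f) y‖ * ‖z - y‖ ^ 2 ≤ M * (2 * ε) ^ 2 :=
    mul_le_mul hH (pow_le_pow_left₀ (norm_nonneg _) hzy 2) (by positivity)
      ((norm_nonneg (fderiv ℝ (fderiv ℝ f) y)).trans hH)
  have := sub_le_Qpoly (jetMap f y) z
  simp only [jetMap] at this ⊢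
  linarith

theorem theta_sub_div_bounds (hf : ConvexOn ℝ univ f)
    (hD2 : ∀ y ∈ D2, DifferentiableAt ℝ f y) {K : NNReal} (hε : 0 < ε)
    (hden : (closedBall x ε ∩ D2).Nonempty) (hlip : LipschitzOnWith K f (closedBall x (2 * ε)))
    (hHess : ∀ y ∈ closedBall x (2 * ε) ∩ D2, ‖fderiv ℝ (fderiv ℝ f) y‖ ≤ M)
    {w : Euc n} (hw : ε ≤ ‖w - x‖) :
    -(3 * K + 2 * M * ε) ≤ (theta f D2 ε x - f x) / ε ∧
      (theta f D2 ε x - f x) / ε ≤ (f w - f x) / ‖w - x‖ + 9 / 2 * M * ε := by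
  obtain ⟨y, hy⟩ := hden
  have hj₀ := jetMap_mem_jet (f := f) hy
  have hlow := sub_le_Qpoly_jetMap_of_lipschitzOn hε hlip hy.1
    (hHess y ⟨closedBall_subset_closedBall (by linarith) hy.1, hy.2⟩)
  have hup := Qpoly_le_of_mem_jet_of_convexOn hf hD2 hε hHess
  obtain ⟨z, hz, hfz⟩ := hf.exists_mem_closedBall_le hε hw
  have hθ_ge := le_theta hε.le hj₀ hlow hup
  have hθ_le := theta_le hj₀ hlow hup hz
  constructor
  · rw [le_div_iff₀ hε]
    linarith
  · have hrhs : ((f w - f x) / ‖w - x‖ + 9 / 2 * M * ε) * ε =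
        ε / ‖w - x‖ * (f w - f x) + 9 / 2 * M * ε ^ 2 := by ring
    rw [div_le_iff₀ hε, hrhs]
    linarith

end Convex

theorem StandingAssumptions.eventually_theta_sub_div_bounds {f : Euc n → ℝ} {D2 : Set (Euc n)}
    (hf : StandingAssumptions f D2) (hconv : ConvexOn ℝ univ f) {ι : Type*} {l : Filter ι}
    {x : ι → Euc n} {xbar : Euc n} (hx : Tendsto x l (𝓝 xbar)) {eps : ι → ℝ}
    (heps : ∀ i, 0 < eps i) (heps0 : Tendsto eps l (𝓝 0)) {z : Euc n} (hz : z ≠ xbar) :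
    ∃ K M : ℝ, ∀ᶠ i in l,
      -(3 * K + 2 * M * eps i) ≤ (theta f D2 (eps i) (x i) - f (x i)) / eps i ∧
      (theta f D2 (eps i) (x i) - f (x i)) / eps i ≤
        (f z - f (x i)) / ‖z - x i‖ + 9 / 2 * M * eps i := by
  obtain ⟨hlip, hD2, hnull, hhess⟩ := hf
  obtain ⟨K, T, hT, hK⟩ := hlip xbar
  obtain ⟨U, hU, hxU, hbdd⟩ := hhess xbar
  obtain ⟨M, hM⟩ := hbdd.exists_norm_le
  have hdense : Dense D2 := MeasureTheory.Measure.dense_of_ae (MeasureTheory.ae_iff.2 hnull)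
  have hzx : 0 < ‖z - xbar‖ - 0 := by simpa [sub_eq_zero] using hz
  refine ⟨K, M, ?_⟩
  filter_upwards [hx.eventually_closedBall_subset (by simpa using heps0.const_mul 2)
      (inter_mem hT (hU.mem_nhds hxU)),
    ((hx.const_sub z).norm.sub heps0).eventually (lt_mem_nhds hzx)] with i hball hfar
  refine theta_sub_div_bounds hconv (fun y hy => (hD2 ▸ hy).1) (heps i)
    (hdense.inter_closedBall_nonempty _ (heps i)) (hK.mono (hball.trans inter_subset_left))
    (fun y hy => hM _ (mem_image_of_mem _ ⟨hball.trans inter_subset_right hy.1, hy.2⟩)) ?_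
  linarith [norm_sub_rev z (x i)]

-- In `ℝ`, the `limsup` of a sequence tending to `-∞` is the junk value `sInf univ = 0`.
lemma Filter.limsup_le_of_tendsto_of_eventually_le {ι : Type*} {l : Filter ι} [l.NeBot]
    {u v w : ι → ℝ} {a b : ℝ} (hw : Tendsto w l (𝓝 b)) (hv : Tendsto v l (𝓝 a))
    (hwu : w ≤ᶠ[l] u) (huv : u ≤ᶠ[l] v) : l.limsup u ≤ a :=
  hv.limsup_eq ▸ limsup_le_limsup huv (hw.isBoundedUnder_ge.mono_ge hwu).isCoboundedUnder_le
    hv.isBoundedUnder_le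

theorem limsup_nonneg_implies_min (f : Euc n → ℝ) (D2 : Set (Euc n))
    (hf : StandingAssumptions f D2) (hconv : ConvexOn ℝ univ f)
    (x : ℕ → Euc n) (xbar : Euc n) (hx : Tendsto x atTop (𝓝 xbar))
    (eps : ℕ → ℝ) (heps : ∀ i, 0 < eps i) (heps0 : Tendsto eps atTop (𝓝 0))
    (hsup : 0 ≤ atTop.limsup (fun i => (theta f D2 (eps i) (x i) - f (x i)) / eps i)) :
    ∀ z : Euc n, f xbar ≤ f z := by
  intro z
  by_contra! hlt
  have hzx : z ≠ xbar := by rintro rfl; exact hlt.false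
  obtain ⟨K, M, hbounds⟩ := hf.eventually_theta_sub_div_bounds hconv hx heps heps0 hzx
  have hlower : Tendsto (fun i => -(3 * K + 2 * M * eps i)) atTop (𝓝 (-(3 * K + 2 * M * 0))) :=
    ((heps0.const_mul (2 * M)).const_add _).neg
  have hupper : Tendsto (fun i => (f z - f (x i)) / ‖z - x i‖ + 9 / 2 * M * eps i) atTop
      (𝓝 ((f z - f xbar) / ‖z - xbar‖)) := by
    simpa using ((tendsto_const_nhds.sub ((hf.1.continuous.tendsto xbar).comp hx)).div
      (hx.const_sub z).norm (norm_ne_zero_iff.2 (sub_ne_zero.2 hzx))).add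
        (heps0.const_mul (9 / 2 * M))
  have hlimsup := limsup_le_of_tendsto_of_eventually_le hlower hupper
    (hbounds.mono fun _ hi => hi.1) (hbounds.mono fun _ hi => hi.2)
  have hslope_neg : (f z - f xbar) / ‖z - xbar‖ < 0 :=
    div_neg_of_neg_of_pos (sub_neg.2 hlt) (norm_pos_iff.2 (sub_ne_zero.2 hzx))
  linarith
end
end

section
/- Let W ⊆ 𝒥²_ε f(x) be finite nonempty, c ∈ (0,1), θ^W := min_{z ∈ B_ε(x)} 𝒯^W_{x,ε}(z), and z̄^W a minimizer. If θ^W ≤ f(x) and f(z̄^W) > f(x) + c(θ^W − f(x)), then z̄^W ∉ pr₁(W), i.e., no element of W has first component z̄^W. -/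
open Metric Set Filter Topology

noncomputable section

variable {n : ℕ}

lemma jet_snd_eq (f : Euc n → ℝ) (hf : Continuous f) (D2 : Set (Euc n)) (ε : ℝ)
    (x : Euc n) {j : JetSpace n} (hj : j ∈ jet f D2 ε x) : j.2.1 = f j.1 := by
  have h1 : j ∈ closure (jetMap f '' (closedBall x (ε + 1) ∩ D2)) := by
    have := mem_iInter.mp hj (ε + 1)
    exact mem_iInter.mp this (by simp [mem_Ioi])
  have hcl : IsClosed {p : JetSpace n | p.2.1 = f p.1} :=
    isClosed_eq (continuous_fst.comp continuous_snd)
      (hf.comp continuous_fst)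
  have : closure (jetMap f '' (closedBall x (ε + 1) ∩ D2)) ⊆ {p : JetSpace n | p.2.1 = f p.1} := by
    apply closure_minimal _ hcl
    rintro p ⟨y, -, rfl⟩
    rfl
  exact this h1

theorem new_jet_element_not_in_W (f : Euc n → ℝ) (D2 : Set (Euc n))
    (hf : StandingAssumptions f D2) (x : Euc n) (ε : ℝ) (hε : 0 ≤ ε)
    (W : Set (JetSpace n)) (hW : W ⊆ jet f D2 ε x) (hfin : W.Finite) (hne : W.Nonempty)
    (c : ℝ) (hc : c ∈ Ioo (0 : ℝ) 1)
    (zbar : Euc n) (hzb : zbar ∈ closedBall x ε)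
    (hmin : IsMinOn (modelW W) (closedBall x ε) zbar)
    (hθ : thetaW W ε x ≤ f x)
    (hdec : f zbar > f x + c * (thetaW W ε x - f x)) :
    ∀ j ∈ W, j.1 ≠ zbar := by
  rintro j hj rfl
  have hcont : Continuous f := hf.1.continuous
  have hjet := jet_snd_eq f hcont D2 ε x (hW hj)
  -- Qpoly j j.1 = f j.1
  have hQ : Qpoly j j.1 = f j.1 := by
    simp [Qpoly, hjet]
  -- modelW W j.1 ≥ f j.1
  have hbdd : BddAbove ((fun k => Qpoly k j.1) '' W) := (hfin.image _).bddAbove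
  have h1 : f j.1 ≤ modelW W j.1 := by
    rw [← hQ]
    exact le_csSup hbdd (mem_image_of_mem _ hj)
  -- thetaW = modelW W j.1
  have hlb : ∀ a ∈ modelW W '' closedBall x ε, modelW W j.1 ≤ a := by
    rintro a ⟨z, hz, rfl⟩
    exact hmin hz
  have h2 : modelW W j.1 ≤ thetaW W ε x :=
    le_csInf ⟨modelW W j.1, mem_image_of_mem _ hzb⟩ hlb
  have h3 : f j.1 ≤ thetaW W ε x := h1.trans h2
  -- contradiction
  have h4 : f x + c * (thetaW W ε x - f x) ≥ thetaW W ε x := by nlinarith [hc.1, hc.2]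
  linarith
end
end

section
/- Under the hypotheses of the previous lemma, if additionally z̄^W is the unique minimizer of min_{z ∈ B_ε(x)} 𝒯^W_{x,ε}(z), then for any J ∈ 𝒥²₀ f(z̄^W), the optimal value strictly increases: θ^{W∪{J}} > θ^W, where θ^{W∪{J}} := min_{z ∈ B_ε(x)} 𝒯^{W∪{J}}_{x,ε}(z). -/
open Metric Set Filter Topology

noncomputable section

variable {n : ℕ}

/-! If `θ^{W ∪ {J}} ≤ θ^W`, a minimizer of `𝒯^{W ∪ {J}}` on the ball would also minimize
`𝒯^W ≤ 𝒯^{W ∪ {J}}`, hence be `z̄` by uniqueness. But `J ∈ 𝒥²₀ f(z̄)` is based at `z̄` with value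
`f(z̄)`, so `𝒯^{W ∪ {J}}(z̄) ≥ f(z̄) > θ^W`, the last inequality because `c < 1` and `θ^W ≤ f(x)`. -/

lemma continuous_Qpoly (j : JetSpace n) : Continuous (Qpoly j) := by
  unfold Qpoly
  fun_prop

lemma continuous_modelW {W : Set (JetSpace n)} (hfin : W.Finite) (hne : W.Nonempty) :
    Continuous (modelW W) := by
  lift W to Finset (JetSpace n) using hfin
  have hsup : modelW (W : Set (JetSpace n)) = fun z => W.sup' hne fun j => Qpoly j z := by
    funext z
    exact (W.sup'_eq_csSup_image hne _).symm
  rw [hsup]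
  exact Continuous.finset_sup'_apply hne fun j _ => continuous_Qpoly j

lemma Qpoly_le_modelW {W : Set (JetSpace n)} (hfin : W.Finite) {j : JetSpace n} (hj : j ∈ W)
    (z : Euc n) : Qpoly j z ≤ modelW W z :=
  le_csSup (hfin.image _).bddAbove (mem_image_of_mem _ hj)

lemma modelW_mono {W V : Set (JetSpace n)} (hWV : W ⊆ V) (hne : W.Nonempty) (hV : V.Finite)
    (z : Euc n) : modelW W z ≤ modelW V z :=
  csSup_le_csSup (hV.image _).bddAbove (hne.image _) (image_mono hWV)

lemma thetaW_eq_of_isMinOn {W : Set (JetSpace n)} {ε : ℝ} {x z : Euc n}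
    (hz : z ∈ closedBall x ε) (hmin : IsMinOn (modelW W) (closedBall x ε) z) :
    thetaW W ε x = modelW W z :=
  (hmin.isGLB hz).csInf_eq ⟨_, mem_image_of_mem _ hz⟩

lemma eq_of_forall_mem_closure_image_closedBall {X Y : Type*} [PseudoMetricSpace X]
    [MetricSpace Y] {g : X → Y} {z : X} (hg : ContinuousAt g z) {S : Set X} {p : Y}
    (hp : ∀ δ > 0, p ∈ closure (g '' (closedBall z δ ∩ S))) : p = g z := by
  refine dist_le_zero.1 (le_of_forall_gt fun η hη => ?_)
  obtain ⟨δ, hδ, hball⟩ := Metric.continuousAt_iff.1 hg (η / 2) (half_pos hη)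
  have himage : g '' (closedBall z (δ / 2) ∩ S) ⊆ closedBall (g z) (η / 2) := by
    rintro _ ⟨y, ⟨hy, -⟩, rfl⟩
    exact (hball ((mem_closedBall.1 hy).trans_lt (half_lt_self hδ))).le
  have := closure_minimal himage isClosed_closedBall (hp _ (half_pos hδ))
  exact (mem_closedBall.1 this).trans_lt (half_lt_self hη)

lemma Qpoly_eq_of_mem_jet_zero {f : Euc n → ℝ} {D2 : Set (Euc n)} {z : Euc n}
    (hf : ContinuousAt f z) {J : JetSpace n} (hJ : J ∈ jet f D2 0 z) : Qpoly J z = f z := by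
  have hbase : (J.1, J.2.1) = (z, f z) := by
    refine eq_of_forall_mem_closure_image_closedBall (g := fun y => (y, f y)) (S := D2)
      (continuousAt_id.prodMk hf) fun δ hδ => ?_
    have hcl : J ∈ closure (jetMap f '' (closedBall z δ ∩ D2)) := mem_iInter₂.1 hJ δ hδ
    have := map_mem_closure (continuous_fst.prodMk (continuous_fst.comp continuous_snd)) hcl
      (mapsTo_image _ _)
    rwa [← image_comp] at this
  obtain ⟨h1, h2⟩ := Prod.mk.inj hbase
  simp [Qpoly, h1, h2]

lemma lt_of_isMinOn_of_unique {α β : Type*} [LinearOrder β] {s : Set α} {F G : α → β}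
    {a b : α} (hb : b ∈ s) (hFa : IsMinOn F s a) (huniq : ∀ z ∈ s, IsMinOn F s z → z = a)
    (hFG : F b ≤ G b) (hlt : F a < G a) : F a < G b := by
  by_contra! hle
  have hFb : IsMinOn F s b := fun z hz => hFG.trans (hle.trans (hFa hz))
  obtain rfl := huniq b hb hFb
  exact hle.not_gt hlt

theorem enlarged_optimal_value_increases_general (f : Euc n → ℝ) (D2 : Set (Euc n))
    (hf : StandingAssumptions f D2) (x : Euc n) (ε : ℝ)
    (W : Set (JetSpace n)) (hfin : W.Finite) (hne : W.Nonempty)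
    (c : ℝ) (hc : c ∈ Ioo (0 : ℝ) 1)
    (zbar : Euc n) (hzb : zbar ∈ closedBall x ε)
    (hmin : IsMinOn (modelW W) (closedBall x ε) zbar)
    (huniq : ∀ z ∈ closedBall x ε, IsMinOn (modelW W) (closedBall x ε) z → z = zbar)
    (hθ : thetaW W ε x ≤ f x)
    (hdec : f zbar > f x + c * (thetaW W ε x - f x))
    (J : JetSpace n) (hJ : J ∈ jet f D2 0 zbar) :
    thetaW W ε x < thetaW (insert J W) ε x := by
  have hθ_lt : thetaW W ε x < f zbar := by
    linarith [mul_nonneg (sub_nonneg.2 hc.2.le) (sub_nonneg.2 hθ)]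
  have hfinJ : (insert J W).Finite := hfin.insert J
  obtain ⟨zs, hzs, hzs_min⟩ := (isCompact_closedBall x ε).exists_isMinOn ⟨zbar, hzb⟩
    (continuous_modelW hfinJ (insert_nonempty J W)).continuousOn
  rw [thetaW_eq_of_isMinOn hzb hmin] at hθ_lt ⊢
  rw [thetaW_eq_of_isMinOn hzs hzs_min]
  refine lt_of_isMinOn_of_unique hzs hmin huniq (modelW_mono (subset_insert J W) hne hfinJ zs) ?_
  calc modelW W zbar < f zbar := hθ_lt
    _ = Qpoly J zbar := (Qpoly_eq_of_mem_jet_zero hf.1.continuous.continuousAt hJ).symm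
    _ ≤ modelW (insert J W) zbar := Qpoly_le_modelW hfinJ (mem_insert J W) zbar

theorem enlarged_optimal_value_increases (f : Euc n → ℝ) (D2 : Set (Euc n))
    (hf : StandingAssumptions f D2) (x : Euc n) (ε : ℝ) (hε : 0 ≤ ε)
    (W : Set (JetSpace n)) (hW : W ⊆ jet f D2 ε x) (hfin : W.Finite) (hne : W.Nonempty)
    (c : ℝ) (hc : c ∈ Ioo (0 : ℝ) 1)
    (zbar : Euc n) (hzb : zbar ∈ closedBall x ε)
    (hmin : IsMinOn (modelW W) (closedBall x ε) zbar)
    (huniq : ∀ z ∈ closedBall x ε, IsMinOn (modelW W) (closedBall x ε) z → z = zbar)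
    (hθ : thetaW W ε x ≤ f x)
    (hdec : f zbar > f x + c * (thetaW W ε x - f x))
    (J : JetSpace n) (hJ : J ∈ jet f D2 0 zbar) :
    thetaW W ε x < thetaW (insert J W) ε x :=
  enlarged_optimal_value_increases_general f D2 hf x ε W hfin hne c hc zbar hzb hmin huniq hθ hdec J
    hJ
end
end
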